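/- Let M be a finitary matroid, B a base of M, H ⊆ E \ B with |H| = κ an uncountable regular cardinal, and B' ⊆ B with |B'| < κ such that C_M(e,B) ∩ B' ≠ ∅ for every e ∈ H. Then there exist e* ∈ H, a set K with e* ∈ K ⊆ C_M(e*,B) \ B', and a family (D_α)_{α<κ} of κ pairwise distinct circuits of M forming a Δ-system with kernel K (i.e., D_α ∩ D_β = K for α ≠ β) such that ⋃_α D_α ⊆ ⋃_{e∈H} C_M(e,B). -/

import Mathlib

/-!
Pass to a `κ`-sized Δ-system of fundamental circuits with kernel `R`, discarding the fewer than
`κ` elements whose circuit meets `B'` outside `R`. After contracting `D = B \ (B' ∪ R)` the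
remaining elements are nonloops spanned by the finite set `R`. A `κ`-subset `Y` of minimum rank
has `κ` pairwise disjoint bases, since otherwise removing their union would lower the rank.
Fixing `e ∈ Y`, all but at most one of these bases avoid `e` and span it, which gives circuits
`C_Q ∋ e` inside `insert e Q ∪ D`. A point of `D` in `C_Q` lies in the fundamental circuit of `e`
or of some element of `Q`, and distinct fundamental circuits meet only in `R`, so two of the
`C_Q` meet only inside the finite set `C(e, B) \ (B' ∪ R)`. Then `κ` of them have the same trace
`K` on that set, and these form the required Δ-system.
-/

open Set

variable {α : Type*}

/-- `C` is a circuit of the matroid `M`: a minimal dependent subset of the ground set. -/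
def MCircuit (M : Matroid α) (C : Set α) : Prop :=
  C ⊆ M.E ∧ ¬ M.Indep C ∧ ∀ D, D ⊂ C → M.Indep D

/-- `C` is the fundamental circuit of `e` with respect to `B`. -/
def FundCircuit (M : Matroid α) (e : α) (B C : Set α) : Prop :=
  MCircuit M C ∧ e ∈ C ∧ C ⊆ insert e B

universe u

open Cardinal

section SetFamily

variable {ι : Type*}

theorem exists_maximal_pairwiseDisjoint (S : Set ι) (F : ι → Set α) :
    ∃ T ⊆ S, T.PairwiseDisjoint F ∧ ∀ i ∈ S, (∀ j ∈ T, Disjoint (F i) (F j)) → i ∈ T := by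
  obtain ⟨T, ⟨hTS, hT⟩, hmax⟩ := zorn_subset {T | T ⊆ S ∧ T.PairwiseDisjoint F} fun c hcS hc ↦
    ⟨⋃₀ c, ⟨sUnion_subset fun T hT ↦ (hcS hT).1,
      (hc.pairwiseDisjoint_sUnion F).2 fun T hT ↦ (hcS hT).2⟩, fun _ ↦ subset_sUnion_of_mem⟩
  refine ⟨T, hTS, hT, fun i hi hdisj ↦ ?_⟩
  have hiT : insert i T ⊆ T := hmax ⟨insert_subset hi hTS,
    hT.insert fun j hj _ ↦ hdisj j hj⟩ (subset_insert i T)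
  exact hiT (mem_insert i T)

theorem Set.Pairwise.kernel_subset {S : Set ι} {F : ι → Set α} {R : Set α}
    (hS : S.Pairwise fun i j ↦ F i ∩ F j = R) (hS2 : S.Nontrivial) {i : ι} (hi : i ∈ S) :
    R ⊆ F i := by
  obtain ⟨j, hj, hji⟩ := hS2.exists_ne i
  exact hS hi hj hji.symm ▸ inter_subset_left

end SetFamily

section Cardinal

variable {ι α : Type u} {κ : Cardinal.{u}} {S : Set ι} {F : ι → Set α}

namespace Cardinal.IsRegular

theorem nontrivial_of_mk_eq (hκ : κ.IsRegular) (hS : #S = κ) : S.Nontrivial := by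
  rw [← nontrivial_coe_sort, ← one_lt_iff_nontrivial, hS]
  exact one_lt_aleph0.trans_le hκ.aleph0_le

theorem nonempty_of_mk_eq (hκ : κ.IsRegular) (hS : #S = κ) : S.Nonempty :=
  (hκ.nontrivial_of_mk_eq hS).nonempty

theorem mk_sdiff_eq (hκ : κ.IsRegular) {T : Set ι} (hS : #S = κ) (hT : #T < κ) :
    #(S \ T : Set ι) = κ := by
  refine le_antisymm (hS ▸ mk_le_mk_of_subset sdiff_subset) (not_lt.1 fun h ↦ ?_)
  exact (hS ▸ le_mk_sdiff_add_mk S T).not_gt (add_lt_of_lt hκ.aleph0_le h hT)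

theorem exists_mk_fiber_eq (hκ : κ.IsRegular) (hS : #S = κ) (f : ι → α)
    (hf : #(f '' S) < κ) : ∃ a, #{i ∈ S | f i = a} = κ := by
  by_contra! h
  have hfib : ∀ a ∈ f '' S, #{i ∈ S | f i = a} < κ := fun a _ ↦
    ((mk_le_mk_of_subset fun _ hi ↦ hi.1).trans hS.le).lt_of_ne (h a)
  have hcover : S ⊆ ⋃ a ∈ f '' S, {i ∈ S | f i = a} := fun i hi ↦
    mem_biUnion (mem_image_of_mem f hi) ⟨hi, rfl⟩
  exact (hS ▸ mk_le_mk_of_subset hcover).not_gt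
    ((card_biUnion_lt_iff_forall_of_isRegular hκ hf).2 hfib)

end Cardinal.IsRegular

theorem Cardinal.IsRegular.exists_pairwiseDisjoint (hκ : κ.IsRegular) (hS : #S = κ)
    (hF : ∀ i ∈ S, #(F i) < κ) (hfib : ∀ x, #{i ∈ S | x ∈ F i} < κ) :
    ∃ T ⊆ S, #T = κ ∧ T.PairwiseDisjoint F := by
  obtain ⟨T, hTS, hT, hmax⟩ := exists_maximal_pairwiseDisjoint S F
  suffices hκT : κ ≤ #T by
    obtain ⟨T', hT'T, hT'⟩ := le_mk_iff_exists_subset.1 hκT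
    exact ⟨T', hT'T.trans hTS, hT', hT.subset hT'T⟩
  by_contra! hTκ
  have hU : #(⋃ j ∈ T, F j) < κ :=
    (card_biUnion_lt_iff_forall_of_isRegular hκ hTκ).2 fun j hj ↦ hF j (hTS hj)
  have hcover : S ⊆ T ∪ ⋃ x ∈ ⋃ j ∈ T, F j, {i ∈ S | x ∈ F i} := by
    intro i hi
    by_cases hiT : i ∈ T
    · exact Or.inl hiT
    obtain ⟨j, hj, hij⟩ : ∃ j ∈ T, ¬ Disjoint (F i) (F j) := by
      by_contra! h
      exact hiT (hmax i hi h)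
    obtain ⟨x, hxi, hxj⟩ := not_disjoint_iff.1 hij
    exact Or.inr (mem_biUnion (mem_biUnion hj hxj) ⟨hi, hxi⟩)
  refine (hS ▸ mk_le_mk_of_subset hcover).not_gt ((mk_union_le _ _).trans_lt ?_)
  exact add_lt_of_lt hκ.aleph0_le hTκ ((card_biUnion_lt_iff_forall_of_isRegular hκ hU).2
    fun x _ ↦ hfib x)

end Cardinal

section DeltaSystem

variable {ι α : Type u} {κ : Cardinal.{u}} {S : Set ι} {F : ι → Set α}

theorem Cardinal.IsRegular.exists_deltaSystem_of_encard_le (hκ : κ.IsRegular)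
    (n : ℕ) (hS : #S = κ) (hF : ∀ i ∈ S, (F i).encard ≤ n) :
    ∃ T ⊆ S, #T = κ ∧ ∃ R, T.Pairwise fun i j ↦ F i ∩ F j = R := by
  induction n generalizing S F with
  | zero =>
    refine ⟨S, subset_rfl, hS, ∅, fun i hi j _ _ ↦ ?_⟩
    change F i ∩ F j = ∅
    rw [show F i = ∅ by simpa using hF i hi, empty_inter]
  | succ n ih =>
    by_cases hx : ∃ x, #{i ∈ S | x ∈ F i} = κ
    · -- a point common to `κ` of the sets goes into the kernel
      obtain ⟨x, hx⟩ := hx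
      obtain ⟨T, hTS, hT, R, hR⟩ := ih (F := fun i ↦ F i \ {x}) hx fun i hi ↦ by
        rw [← ENat.add_le_add_iff_right ENat.one_ne_top, encard_sdiff_singleton_add_one hi.2]
        exact_mod_cast hF i hi.1
      refine ⟨T, hTS.trans (sep_subset _ _), hT, insert x R, fun i hi j hj hij ↦ ?_⟩
      change F i ∩ F j = insert x R
      rw [← hR hi hj hij, ← sdiff_inter_distrib_right, insert_sdiff_singleton,
        insert_eq_of_mem (show x ∈ F i ∩ F j from ⟨(hTS hi).2, (hTS hj).2⟩)]
    · push Not at hx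
      obtain ⟨T, hTS, hT, hdisj⟩ := hκ.exists_pairwiseDisjoint hS
        (fun i hi ↦ (finite_of_encard_le_coe (hF i hi)).lt_aleph0.trans_le hκ.aleph0_le)
        fun x ↦ ((mk_le_mk_of_subset (sep_subset _ _)).trans hS.le).lt_of_ne (hx x)
      exact ⟨T, hTS, hT, ∅, fun i hi j hj hij ↦ (hdisj hi hj hij).inter_eq⟩

theorem Cardinal.IsRegular.exists_deltaSystem (hκ : κ.IsRegular) (hunc : ℵ₀ < κ)
    (hS : #S = κ) (hF : ∀ i ∈ S, (F i).Finite) :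
    ∃ T ⊆ S, #T = κ ∧ ∃ R, T.Pairwise fun i j ↦ F i ∩ F j = R := by
  obtain ⟨⟨n⟩, hn⟩ := hκ.exists_mk_fiber_eq hS (fun i ↦ ULift.up.{u} (F i).ncard)
    ((mk_le_aleph0).trans_lt hunc)
  obtain ⟨T, hTS, hT, R, hR⟩ := hκ.exists_deltaSystem_of_encard_le n hn fun i hi ↦ by
    rw [← (hF i hi.1).cast_ncard_eq, ULift.up.inj hi.2]
  exact ⟨T, hTS.trans (sep_subset _ _), hT, R, hR⟩

theorem Set.Pairwise.mk_setOf_not_inter_subset_le {R : Set α}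
    (hS : S.Pairwise fun i j ↦ F i ∩ F j = R) (X : Set α) :
    #{i ∈ S | ¬ F i ∩ X ⊆ R} ≤ #X := by
  have hwit : ∀ i : {i ∈ S | ¬ F i ∩ X ⊆ R}, ∃ x : X, (x : α) ∈ F i ∧ (x : α) ∉ R := fun i ↦ by
    obtain ⟨x, ⟨hxF, hxX⟩, hxR⟩ := not_subset.1 i.2.2
    exact ⟨⟨x, hxX⟩, hxF, hxR⟩
  choose g hgF hgR using hwit
  refine mk_le_of_injective (f := g) fun i j hij ↦ Subtype.ext (by_contra fun hne ↦ hgR i ?_)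
  rw [← hS i.2.1 j.2.1 hne]
  exact ⟨hgF i, hij ▸ hgF j⟩

theorem Cardinal.IsRegular.exists_deltaSystem_inter_subset_kernel (hκ : κ.IsRegular)
    (hunc : ℵ₀ < κ) (hS : #S = κ) (hF : ∀ i ∈ S, (F i).Finite) {X : Set α} (hX : #X < κ) :
    ∃ T ⊆ S, #T = κ ∧ ∃ R, (T.Pairwise fun i j ↦ F i ∩ F j = R) ∧ ∀ i ∈ T, F i ∩ X ⊆ R := by
  obtain ⟨T, hTS, hT, R, hR⟩ := hκ.exists_deltaSystem hunc hS hF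
  refine ⟨T \ {i ∈ T | ¬ F i ∩ X ⊆ R}, sdiff_subset.trans hTS,
    hκ.mk_sdiff_eq hT ((hR.mk_setOf_not_inter_subset_le X).trans_lt hX), R,
    hR.mono sdiff_subset, fun i hi ↦ by_contra fun h ↦ hi.2 ⟨hi.1, h⟩⟩

theorem Cardinal.IsRegular.exists_deltaSystem_of_pairwise_inter_subset (hκ : κ.IsRegular)
    (hS : #S = κ) {W : Set α} (hW : W.Finite) (hSW : S.Pairwise fun i j ↦ F i ∩ F j ⊆ W) :
    ∃ T ⊆ S, #T = κ ∧ ∃ K, (∀ i ∈ T, F i ∩ W = K) ∧ T.Pairwise fun i j ↦ F i ∩ F j = K := by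
  have himage : ((F · ∩ W) '' S).Finite :=
    hW.finite_subsets.subset (by rintro _ ⟨i, -, rfl⟩; exact inter_subset_right)
  obtain ⟨K, hK⟩ := hκ.exists_mk_fiber_eq hS (F · ∩ W)
    (himage.lt_aleph0.trans_le hκ.aleph0_le)
  refine ⟨_, sep_subset _ _, hK, K, fun i hi ↦ hi.2, fun i hi j hj hij ↦ ?_⟩
  calc F i ∩ F j = (F i ∩ W) ∩ (F j ∩ W) := by
        rw [inter_inter_inter_comm, inter_self, inter_eq_left.2 (hSW hi.1 hj.1 hij)]
    _ = K := by rw [hi.2, hj.2, inter_self]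

end DeltaSystem

theorem mCircuit_iff_isCircuit {M : Matroid α} {C : Set α} : MCircuit M C ↔ M.IsCircuit C := by
  rw [Matroid.isCircuit_iff_forall_ssubset, Matroid.Dep, MCircuit]
  tauto

theorem FundCircuit.eq_fundCircuit {M : Matroid α} {e : α} {B C : Set α}
    (h : FundCircuit M e B C) (hB : M.Indep B) : C = M.fundCircuit e B :=
  (mCircuit_iff_isCircuit.1 h.1).eq_fundCircuit_of_subset hB h.2.2

namespace Matroid

section Spanning

variable {α : Type u} {κ : Cardinal.{u}} {M : Matroid α} {X Y : Set α}

theorem exists_subset_mk_eq_forall_eRk_le (M : Matroid α) (hX : #X = κ) :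
    ∃ Y ⊆ X, #Y = κ ∧ ∀ Z ⊆ Y, #Z = κ → M.eRk Y ≤ M.eRk Z := by
  obtain ⟨_, ⟨Y, hYX, hY, rfl⟩, hmin⟩ := wellFounded_lt.has_min
    {r | ∃ Y ⊆ X, #Y = κ ∧ M.eRk Y = r} ⟨_, X, subset_rfl, hX, rfl⟩
  exact ⟨Y, hYX, hY, fun Z hZY hZ ↦ not_lt.1 (hmin _ ⟨Z, hZY.trans hYX, hZ, rfl⟩)⟩

theorem exists_pairwiseDisjoint_isBasis (hκ : κ.IsRegular) (hY : #Y = κ)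
    (hYr : M.IsRkFinite Y) (hYl : ∀ e ∈ Y, M.IsNonloop e)
    (hmin : ∀ Z ⊆ Y, #Z = κ → M.eRk Y ≤ M.eRk Z) :
    ∃ 𝒜 : Set (Set α), #𝒜 = κ ∧ 𝒜.PairwiseDisjoint id ∧ ∀ Q ∈ 𝒜, M.IsBasis Q Y := by
  obtain ⟨𝒜, h𝒜, hdisj, hmax⟩ := exists_maximal_pairwiseDisjoint {Q | M.IsBasis Q Y} id
  suffices hκ𝒜 : κ ≤ #𝒜 by
    obtain ⟨𝒜', h𝒜'𝒜, h𝒜'⟩ := le_mk_iff_exists_subset.1 hκ𝒜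
    exact ⟨𝒜', h𝒜', hdisj.subset h𝒜'𝒜, fun Q hQ ↦ h𝒜 (h𝒜'𝒜 hQ)⟩
  by_contra! h𝒜κ
  have hU : #(⋃ Q ∈ 𝒜, Q) < κ := (card_biUnion_lt_iff_forall_of_isRegular hκ h𝒜κ).2
    fun Q hQ ↦ (hYr.finite_of_isBasis (h𝒜 hQ)).lt_aleph0.trans_le hκ.aleph0_le
  set Y' := Y \ ⋃ Q ∈ 𝒜, Q
  have hY' : #Y' = κ := hκ.mk_sdiff_eq hY hU
  have hYE : Y ⊆ M.E := fun e he ↦ (hYl e he).mem_ground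
  obtain ⟨I, hI⟩ := M.exists_isBasis Y' (sdiff_subset.trans hYE)
  -- `Y'` has the rank of `Y`, so a basis of `Y'` is one of `Y` avoiding every member of `𝒜`
  have hIY : M.IsBasis I Y := by
    refine hI.indep.isBasis_of_subset_of_subset_closure (hI.subset.trans sdiff_subset) ?_
    rw [hI.closure_eq_closure, (hYr.subset sdiff_subset).closure_eq_closure_of_subset_of_eRk_ge_eRk
      sdiff_subset (hmin Y' sdiff_subset hY')]
    exact M.subset_closure Y hYE
  have hI𝒜 : I ∈ 𝒜 := hmax I hIY fun Q hQ ↦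
    disjoint_left.2 fun x hxI hxQ ↦ (hI.subset hxI).2 (mem_biUnion hQ hxQ)
  have hIempty : I = ∅ :=
    eq_empty_of_forall_notMem fun x hx ↦ (hI.subset hx).2 (mem_biUnion hI𝒜 hx)
  obtain ⟨e, he⟩ := hκ.nonempty_of_mk_eq hY'
  have heI := hI.subset_closure he
  rw [hIempty] at heI
  exact (hYl e he.1).not_isLoop heI

theorem exists_pairwiseDisjoint_forall_mem_closure (hκ : κ.IsRegular) (hX : #X = κ)
    (hXr : M.IsRkFinite X) (hXl : ∀ e ∈ X, M.IsNonloop e) :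
    ∃ e ∈ X, ∃ 𝒬 : Set (Set α), #𝒬 = κ ∧ 𝒬.PairwiseDisjoint id ∧
      ∀ Q ∈ 𝒬, Q ⊆ X \ {e} ∧ e ∈ M.closure Q := by
  obtain ⟨Y, hYX, hY, hmin⟩ := M.exists_subset_mk_eq_forall_eRk_le hX
  obtain ⟨𝒜, h𝒜, hdisj, hbasis⟩ := exists_pairwiseDisjoint_isBasis hκ hY (hXr.subset hYX)
    (fun e he ↦ hXl e (hYX he)) hmin
  obtain ⟨e, he⟩ := hκ.nonempty_of_mk_eq hY
  have hsmall : #{Q ∈ 𝒜 | e ∈ Q} < κ :=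
    (mk_le_one_iff_set_subsingleton.2 fun Q hQ Q' hQ' ↦ by_contra fun hne ↦
      disjoint_left.1 (hdisj hQ.1 hQ'.1 hne) hQ.2 hQ'.2).trans_lt
      (one_lt_aleph0.trans_le hκ.aleph0_le)
  refine ⟨e, hYX he, 𝒜 \ {Q ∈ 𝒜 | e ∈ Q}, hκ.mk_sdiff_eq h𝒜 hsmall,
    hdisj.subset sdiff_subset, fun Q hQ ↦ ⟨fun x hx ↦ ⟨hYX ((hbasis Q hQ.1).subset hx), ?_⟩, ?_⟩⟩
  · rintro rfl
    exact hQ.2 ⟨hQ.1, hx⟩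
  · rw [(hbasis Q hQ.1).closure_eq_closure]
    exact M.subset_closure Y (fun f hf ↦ (hXl f (hYX hf)).mem_ground) he

end Spanning

section FundCircuit

variable {M : Matroid α} {A B C H Q R S : Set α} {e : α}

theorem IsCircuit.inter_subset_of_subset_closure (hC : M.IsCircuit C) (hB : M.Indep B)
    (hCQ : C ⊆ Q ∪ B) (hAB : A ⊆ B) (hQA : Q ⊆ M.closure A) : C ∩ B ⊆ A := by
  rintro y ⟨hyC, hyB⟩
  by_contra hyA
  have hCy : C \ {y} ⊆ M.closure (B \ {y}) := by
    rintro z ⟨hzC, hzy⟩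
    rcases hCQ hzC with hzQ | hzB
    · exact M.closure_subset_closure (subset_sdiff_singleton hAB hyA) (hQA hzQ)
    · exact M.subset_closure _ (sdiff_subset.trans hB.subset_ground) ⟨hzB, hzy⟩
  exact hB.notMem_closure_sdiff_of_mem hyB
    (M.closure_subset_closure_of_subset_closure hCy (hC.mem_closure_sdiff_singleton_of_mem hyC))

theorem IsBase.subset_biUnion_fundCircuit (hB : M.IsBase B) (hC : M.IsCircuit C)
    (hQ : Q ⊆ M.E \ B) (hCQ : C ⊆ Q ∪ B) : C ⊆ ⋃ f ∈ Q, M.fundCircuit f B := by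
  have hQA : Q ⊆ M.closure (⋃ f ∈ Q, M.fundCircuit f B ∩ B) := fun f hf ↦ by
    refine M.closure_subset_closure ?_ ((hB.fundCircuit_isCircuit (hQ hf).1 (hQ hf).2)
      |>.mem_closure_sdiff_singleton_of_mem (M.mem_fundCircuit f B))
    rw [M.fundCircuit_sdiff_eq_inter (hQ hf).2]
    exact subset_biUnion_of_mem (u := fun f ↦ M.fundCircuit f B ∩ B) hf
  intro x hx
  by_cases hxB : x ∈ B
  · exact biUnion_mono subset_rfl (fun _ _ ↦ inter_subset_left) <|
      hC.inter_subset_of_subset_closure hB.indep hCQ (iUnion₂_subset fun _ _ ↦ inter_subset_right)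
      hQA ⟨hx, hxB⟩
  · exact mem_biUnion ((hCQ hx).resolve_right hxB) (M.mem_fundCircuit x B)

theorem fundCircuit_inter_fundCircuit_subset (M : Matroid α) (B : Set α) {f : α} (hef : e ≠ f) :
    M.fundCircuit e B ∩ M.fundCircuit f B ⊆ B := by
  rintro x ⟨hxe, hxf⟩
  rcases M.fundCircuit_subset_insert e B hxe with rfl | hx
  · exact (M.fundCircuit_subset_insert f B hxf).resolve_left hef
  · exact hx

theorem mem_contract_closure_of_fundCircuit_inter_subset (hB : M.IsBase B) (he : e ∈ M.E \ B)
    (hSR : M.fundCircuit e B ∩ S ⊆ R) : e ∈ (M ／ (B \ S)).closure R := by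
  refine (M.contract_closure_eq _ _).symm ▸ ⟨M.closure_subset_closure ?_
    ((hB.fundCircuit_isCircuit he.1 he.2).mem_closure_sdiff_singleton_of_mem
    (M.mem_fundCircuit e B)), fun h ↦ he.2 h.1⟩
  rw [M.fundCircuit_sdiff_eq_inter he.2]
  rintro x ⟨hxC, hxB⟩
  by_cases hxS : x ∈ S
  · exact Or.inl (hSR ⟨hxC, hxS⟩)
  · exact Or.inr ⟨hxB, hxS⟩

theorem isNonloop_contract_of_fundCircuit_inter_nonempty (hB : M.IsBase B) (he : e ∈ M.E \ B)
    (hSB : S ⊆ B) (hS : (M.fundCircuit e B ∩ S).Nonempty) : (M ／ (B \ S)).IsNonloop e := by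
  refine contract_isNonloop_iff.2 ⟨he.1, fun hecl ↦ ?_⟩
  obtain ⟨C, hCs, hC, -⟩ := exists_isCircuit_of_mem_closure hecl fun h ↦ he.2 h.1
  obtain ⟨x, hxC, hxS⟩ := hS
  rw [← hC.eq_fundCircuit_of_subset hB.indep (hCs.trans (insert_subset_insert sdiff_subset))]
    at hxC
  rcases hCs hxC with rfl | hx
  · exact he.2 (hSB hxS)
  · exact hx.2 hxS

theorem IsBase.inter_subset_fundCircuit_sdiff (hB : M.IsBase B) (hH : H ⊆ M.E \ B)
    (hSB : S ⊆ B) (hΔ : H.Pairwise fun f f' ↦ M.fundCircuit f B ∩ M.fundCircuit f' B = R)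
    (hHS : ∀ f ∈ H, M.fundCircuit f B ∩ S = R) (he : e ∈ H) {Q Q' C C' : Set α}
    (hQ : Q ⊆ H) (hQ' : Q' ⊆ H) (hQQ' : Disjoint Q Q') (hC : M.IsCircuit C)
    (hC' : M.IsCircuit C') (hCQ : C ⊆ insert e Q ∪ (B \ S)) (hCQ' : C' ⊆ insert e Q' ∪ (B \ S)) :
    C ∩ C' ⊆ M.fundCircuit e B \ S := by
  have hsub {Q C : Set α} (hQ : Q ⊆ H) (hC : M.IsCircuit C) (hCQ : C ⊆ insert e Q ∪ (B \ S)) :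
      C ⊆ ⋃ f ∈ insert e Q, M.fundCircuit f B :=
    hB.subset_biUnion_fundCircuit hC (insert_subset (hH he) (hQ.trans hH))
      (hCQ.trans (union_subset_union_right _ sdiff_subset))
  rintro x ⟨hxC, hxC'⟩
  have hxS : x ∉ S := by
    rcases hCQ hxC with (rfl | hxQ) | hxBS
    · exact fun h ↦ (hH he).2 (hSB h)
    · exact fun h ↦ (hH (hQ hxQ)).2 (hSB h)
    · exact hxBS.2
  refine ⟨?_, hxS⟩
  obtain ⟨f, hf, hxf⟩ := mem_iUnion₂.1 (hsub hQ hC hCQ hxC)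
  obtain ⟨f', hf', hxf'⟩ := mem_iUnion₂.1 (hsub hQ' hC' hCQ' hxC')
  rcases hf with rfl | hfQ
  · exact hxf
  rcases hf' with rfl | hf'Q'
  · exact hxf'
  have hxR : x ∈ R := hΔ (hQ hfQ) (hQ' hf'Q') (hQQ'.ne_of_mem hfQ hf'Q') ▸ ⟨hxf, hxf'⟩
  exact absurd ((hHS f (hQ hfQ)).ge hxR).2 hxS

end FundCircuit

section DeltaSystem

variable {α : Type u} {κ : Cardinal.{u}} {M : Matroid α} {B H R S : Set α}

theorem IsBase.exists_pairwiseDisjoint_isCircuit [M.Finitary] (hκ : κ.IsRegular)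
    (hB : M.IsBase B) (hH : H ⊆ M.E \ B) (hHκ : #H = κ) (hSB : S ⊆ B)
    (hHS : ∀ f ∈ H, M.fundCircuit f B ∩ S = R) (hR : R.Nonempty) :
    ∃ e ∈ H, ∃ 𝒬 : Set (Set α), ∃ C : Set α → Set α, #𝒬 = κ ∧ 𝒬.PairwiseDisjoint id ∧
      ∀ Q ∈ 𝒬, Q ⊆ H ∧ M.IsCircuit (C Q) ∧ e ∈ C Q ∧ C Q ⊆ insert e Q ∪ (B \ S) := by
  obtain ⟨e₀, he₀⟩ := hκ.nonempty_of_mk_eq hHκ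
  have hRfin : R.Finite := (hB.fundCircuit_isCircuit (hH he₀).1 (hH he₀).2).finite.subset
    ((hHS e₀ he₀).ge.trans inter_subset_left)
  have hHcl : H ⊆ (M ／ (B \ S)).closure R := fun f hf ↦
    mem_contract_closure_of_fundCircuit_inter_subset hB (hH hf) (hHS f hf).le
  obtain ⟨e, he, 𝒬, h𝒬κ, h𝒬disj, h𝒬⟩ :=
    (M ／ (B \ S)).exists_pairwiseDisjoint_forall_mem_closure hκ hHκ
      ((isRkFinite_of_finite _ hRfin).closure.subset hHcl) fun f hf ↦
      isNonloop_contract_of_fundCircuit_inter_nonempty hB (hH hf) hSB ((hHS f hf).symm ▸ hR)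
  have hcirc : ∀ Q ∈ 𝒬, ∃ C, M.IsCircuit C ∧ e ∈ C ∧ C ⊆ insert e Q ∪ (B \ S) := by
    intro Q hQ
    obtain ⟨hQe, heQ⟩ := h𝒬 Q hQ
    rw [contract_closure_eq] at heQ
    obtain ⟨C, hCs, hC, heC⟩ := exists_isCircuit_of_mem_closure heQ.1
      (by rintro (h | h); exacts [(hQe h).2 rfl, heQ.2 h])
    exact ⟨C, hC, heC, insert_union ▸ hCs⟩
  choose! C hC heC hCs using hcirc
  exact ⟨e, he, 𝒬, C, h𝒬κ, h𝒬disj,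
    fun Q hQ ↦ ⟨(h𝒬 Q hQ).1.trans sdiff_subset, hC Q hQ, heC Q hQ, hCs Q hQ⟩⟩

theorem IsBase.exists_deltaSystem_isCircuit [M.Finitary] (hκ : κ.IsRegular)
    (hB : M.IsBase B) (hH : H ⊆ M.E \ B) (hHκ : #H = κ)
    (hΔ : H.Pairwise fun f f' ↦ M.fundCircuit f B ∩ M.fundCircuit f' B = R) (hSB : S ⊆ B)
    (hHS : ∀ f ∈ H, M.fundCircuit f B ∩ S = R) (hR : R.Nonempty) :
    ∃ e ∈ H, ∃ K, e ∈ K ∧ K ⊆ M.fundCircuit e B \ S ∧ ∃ 𝒟 : Set (Set α), #𝒟 = κ ∧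
      (∀ C ∈ 𝒟, M.IsCircuit C) ∧ (𝒟.Pairwise fun C C' ↦ C ∩ C' = K) ∧
      ⋃₀ 𝒟 ⊆ ⋃ f ∈ H, M.fundCircuit f B := by
  obtain ⟨e, he, 𝒬, C, h𝒬κ, h𝒬disj, h𝒬⟩ :=
    hB.exists_pairwiseDisjoint_isCircuit hκ hH hHκ hSB hHS hR
  have heC : M.IsCircuit (M.fundCircuit e B) := hB.fundCircuit_isCircuit (hH he).1 (hH he).2
  obtain ⟨T, hT𝒬, hTκ, K, hTW, hTK⟩ := hκ.exists_deltaSystem_of_pairwise_inter_subset h𝒬κ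
    (heC.finite.subset sdiff_subset) fun Q hQ Q' hQ' hne ↦
      hB.inter_subset_fundCircuit_sdiff hH hSB hΔ hHS he (h𝒬 Q hQ).1 (h𝒬 Q' hQ').1
      (h𝒬disj hQ hQ' hne) (h𝒬 Q hQ).2.1 (h𝒬 Q' hQ').2.1 (h𝒬 Q hQ).2.2.2 (h𝒬 Q' hQ').2.2.2
  obtain ⟨Q₀, hQ₀⟩ := hκ.nonempty_of_mk_eq hTκ
  have hKW : K ⊆ M.fundCircuit e B \ S := hTW Q₀ hQ₀ ▸ inter_subset_right
  -- `K` misses the nonempty `R ⊆ M.fundCircuit e B`, so it is not a circuit and the `C Q` differ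
  have hinj : InjOn C T := fun Q hQ Q' hQ' hCQ ↦ by_contra fun hne ↦ by
    have hCK : C Q = K := by rw [← hTK hQ hQ' hne, ← hCQ, inter_self]
    have hCe := (h𝒬 Q (hT𝒬 hQ)).2.1.eq_of_subset_isCircuit heC (hCK ▸ hKW.trans sdiff_subset)
    obtain ⟨x, hx⟩ := hR
    have hxK : x ∈ K := hCK ▸ hCe ▸ ((hHS e he).ge.trans inter_subset_left) hx
    exact (hKW hxK).2 ((hHS e he).ge.trans inter_subset_right hx)
  refine ⟨e, he, K, hTW Q₀ hQ₀ ▸ ⟨(h𝒬 Q₀ (hT𝒬 hQ₀)).2.2.1, M.mem_fundCircuit e B,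
    fun h ↦ (hH he).2 (hSB h)⟩, hKW, C '' T, by rw [mk_image_eq_of_injOn _ _ hinj, hTκ], ?_, ?_, ?_⟩
  · rintro _ ⟨Q, hQ, rfl⟩
    exact (h𝒬 Q (hT𝒬 hQ)).2.1
  · rintro _ ⟨Q, hQ, rfl⟩ _ ⟨Q', hQ', rfl⟩ hne
    exact hTK hQ hQ' fun h ↦ hne (h ▸ rfl)
  · rintro x ⟨_, ⟨Q, hQ, rfl⟩, hx⟩
    obtain ⟨hQH, hC, -, hCs⟩ := h𝒬 Q (hT𝒬 hQ)
    exact biUnion_mono (insert_subset he hQH) (fun _ _ ↦ subset_rfl) <|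
      hB.subset_biUnion_fundCircuit hC (insert_subset (hH he) (hQH.trans hH))
      (hCs.trans (union_subset_union_right _ sdiff_subset)) hx

end DeltaSystem

end Matroid

/-- The key lemma: if `B` is a base, `H ⊆ E \ B` has uncountable regular cardinality `κ`,
and some `B' ⊆ B` with `|B'| < κ` meets every fundamental circuit `C_M(e,B)` for `e ∈ H`,
then there are `e* ∈ H` and a κ-sized Δ-system of circuits with kernel `K` satisfying
`e* ∈ K ⊆ C_M(e*,B) \ B'`, all contained in `⋃_{e ∈ H} C_M(e,B)`. -/
theorem stmt9 {α : Type u} (M : Matroid α) [M.Finitary] (B : Set α) (hB : M.IsBase B)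
    (κ : Cardinal.{u}) (hreg : κ.IsRegular) (hunc : Cardinal.aleph0 < κ)
    (H : Set α) (hH : H ⊆ M.E \ B) (hHcard : Cardinal.mk H = κ)
    (Cf : α → Set α) (hCf : ∀ e ∈ H, FundCircuit M e B (Cf e))
    (B' : Set α) (hB'sub : B' ⊆ B) (hB'card : Cardinal.mk B' < κ)
    (hmeet : ∀ e ∈ H, (Cf e ∩ B').Nonempty) :
    ∃ e' ∈ H, ∃ K : Set α, e' ∈ K ∧ K ⊆ Cf e' \ B' ∧
      ∃ 𝒟 : Set (Set α), Cardinal.mk 𝒟 = κ ∧ (∀ C ∈ 𝒟, MCircuit M C) ∧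
        (∀ C₁ ∈ 𝒟, ∀ C₂ ∈ 𝒟, C₁ ≠ C₂ → C₁ ∩ C₂ = K) ∧
        (⋃₀ 𝒟) ⊆ ⋃ e ∈ H, Cf e := by
  have hCf_eq : ∀ e ∈ H, Cf e = M.fundCircuit e B := fun e he ↦
    (hCf e he).eq_fundCircuit hB.indep
  obtain ⟨H₁, hH₁H, hH₁κ, R, hΔ, hB'R⟩ := hreg.exists_deltaSystem_inter_subset_kernel hunc hHcard
    (fun e he ↦ (hB.fundCircuit_isCircuit (hH he).1 (hH he).2).finite) hB'card
  have hH₁ := hreg.nontrivial_of_mk_eq hH₁κ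
  obtain ⟨e, he, f, hf, hef⟩ := id hH₁
  have hRB : R ⊆ B := hΔ he hf hef ▸ M.fundCircuit_inter_fundCircuit_subset B hef
  have hR : R.Nonempty := (hmeet e (hH₁H he)).mono (hCf_eq e (hH₁H he) ▸ hB'R e he)
  have hH₁S : ∀ e ∈ H₁, M.fundCircuit e B ∩ (B' ∪ R) = R := fun e he ↦
    subset_antisymm (fun x ⟨hx, hx'⟩ ↦ hx'.elim (fun h ↦ hB'R e he ⟨hx, h⟩) id)
      (subset_inter (hΔ.kernel_subset hH₁ he) subset_union_right)
  obtain ⟨e', he', K, he'K, hK, 𝒟, h𝒟κ, h𝒟C, h𝒟K, h𝒟U⟩ := hB.exists_deltaSystem_isCircuit hreg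
    (hH₁H.trans hH) hH₁κ hΔ (union_subset hB'sub hRB) hH₁S hR
  refine ⟨e', hH₁H he', K, he'K, ?_, 𝒟, h𝒟κ, fun C hC ↦ mCircuit_iff_isCircuit.2 (h𝒟C C hC),
    fun C₁ h₁ C₂ h₂ ↦ h𝒟K h₁ h₂, h𝒟U.trans (biUnion_mono hH₁H fun e he ↦ (hCf_eq e he).ge)⟩
  rw [hCf_eq e' (hH₁H he')]
  exact hK.trans (sdiff_subset_sdiff_right subset_union_left)
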